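/- arXiv:1611.07505 — 6 statements merged into one kernel-verified Lean document; each statement's English description precedes it below -/
import Mathlib

section
/- Let I be a finite nonempty index set, X a real |I|×d matrix, and n ∈ ℝ^I with n(i) ≥ 0 for all i. Then the MLE exists (i.e., there is m̂ ∈ ℝ^I with m̂(i) > 0 for all i, log m̂ in the column space of X, and l(m̂) ≥ l(m) for every m ∈ ℝ^I with m(i) > 0 for all i and log m in the column space of X) if and only if there exists y ∈ ℝ^I such that Xᵀy = 0 and y(i) + n(i) > 0 for all i ∈ I. -/
/-!
In the coordinates `μ = log m` the log-likelihood becomes `n ⬝ᵥ μ - ∑ i, exp (μ i)`, to be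
maximized over the column space `V` of `X`. At a maximizer `μ` the derivative along every `v ∈ V`
vanishes, so `y = exp μ - n` is orthogonal to `V` (i.e. `Xᵀ y = 0`) with `y + n = exp μ > 0`.
Conversely, if `y ⊥ V` and `c = y + n > 0`, then on `V` the log-likelihood agrees with
`c ⬝ᵥ μ - ∑ i, exp (μ i) = ∑ i, (c i * μ i - exp (μ i))`; each summand is bounded above and tends
to `-∞` as `|μ i| → ∞`, so this function is coercive and attains its maximum on the closed set `V`.
-/

open Real Filter Matrix

/-- The log-likelihood `l(m)` in the coordinates `μ = log m`. -/
noncomputable def logLik {I : Type*} [Fintype I] (n μ : I → ℝ) : ℝ :=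
  n ⬝ᵥ μ - ∑ i, exp (μ i)

lemma mul_sub_exp_le {c : ℝ} (hc : 0 < c) (x : ℝ) : c * x - exp x ≤ c * log c - c := by
  have h := add_one_le_exp (x - log c)
  rw [exp_sub, exp_log hc, le_div_iff₀ hc] at h
  linarith

lemma tendsto_mul_sub_exp_cocompact_atBot {c : ℝ} (hc : 0 < c) :
    Tendsto (fun x => c * x - exp x) (cocompact ℝ) atBot := by
  rw [cocompact_eq_atBot_atTop, tendsto_sup]
  constructor
  · refine tendsto_atBot_mono (fun x => sub_le_self _ (exp_pos x).le) ?_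
    exact tendsto_id.const_mul_atBot hc
  · -- `c x - exp x = (2c x - exp x) - c x`, and the first term is bounded above
    have h2c : 0 < 2 * c := by positivity
    refine tendsto_atBot_mono (fun x => ?_)
      (tendsto_atBot_add_const_left _ (2 * c * log (2 * c) - 2 * c)
        (tendsto_neg_atTop_atBot.comp (tendsto_id.const_mul_atTop hc)))
    have := mul_sub_exp_le h2c x
    simp only [Function.comp, id]
    linarith

lemma tendsto_sum_apply_cocompact_atBot {ι : Type*} [Fintype ι] {X : ι → Type*}
    [∀ i, TopologicalSpace (X i)] {f : ∀ i, X i → ℝ} {B : ι → ℝ} (hB : ∀ i x, f i x ≤ B i)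
    (hf : ∀ i, Tendsto (f i) (cocompact (X i)) atBot) :
    Tendsto (fun x => ∑ i, f i (x i)) (cocompact (∀ i, X i)) atBot := by
  classical
  rw [← coprodᵢ_cocompact, Filter.coprodᵢ, tendsto_iSup]
  intro i
  refine tendsto_atBot_mono (fun x => ?_)
    (tendsto_atBot_add_const_right _ (∑ k ∈ Finset.univ.erase i, B k)
      ((hf i).comp tendsto_comap))
  rw [← Finset.add_sum_erase _ _ (Finset.mem_univ i)]
  exact add_le_add le_rfl (Finset.sum_le_sum fun k _ => hB k _)

section LogLik

variable {I : Type*} [Fintype I]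

lemma continuous_logLik (n : I → ℝ) : Continuous (logLik n) := by
  unfold logLik; fun_prop

lemma tendsto_logLik_cocompact_atBot {c : I → ℝ} (hc : ∀ i, 0 < c i) :
    Tendsto (logLik c) (cocompact (I → ℝ)) atBot := by
  have : logLik c = fun μ => ∑ i, (c i * μ i - exp (μ i)) := by
    ext μ; simp [logLik, dotProduct, Finset.sum_sub_distrib]
  rw [this]
  exact tendsto_sum_apply_cocompact_atBot (fun i => mul_sub_exp_le (hc i))
    fun i => tendsto_mul_sub_exp_cocompact_atBot (hc i)

lemma logLik_add_of_dotProduct_eq_zero {y n μ : I → ℝ} (h : y ⬝ᵥ μ = 0) :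
    logLik (y + n) μ = logLik n μ := by
  simp [logLik, add_dotProduct, h]

lemma hasDerivAt_logLik_line (n μ v : I → ℝ) :
    HasDerivAt (fun t : ℝ => logLik n (μ + t • v)) ((n - fun i => exp (μ i)) ⬝ᵥ v) 0 := by
  have hlin : HasDerivAt (fun t : ℝ => n ⬝ᵥ (μ + t • v)) (n ⬝ᵥ v) 0 := by
    simpa [dotProduct_add, dotProduct_smul] using
      ((hasDerivAt_id (0 : ℝ)).smul_const (n ⬝ᵥ v)).const_add (n ⬝ᵥ μ)
  have hexp : HasDerivAt (fun t : ℝ => ∑ i, exp ((μ + t • v) i)) (∑ i, exp (μ i) * v i) 0 := by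
    refine HasDerivAt.fun_sum fun i _ => ?_
    simpa using ((hasDerivAt_mul_const (v i)).const_add (μ i)).exp (x := 0)
  rw [sub_dotProduct]
  exact hlin.fun_sub hexp

lemma dotProduct_eq_zero_of_isMaxOn_logLik {n μ v : I → ℝ} {V : Submodule ℝ (I → ℝ)}
    (hμ : μ ∈ V) (hmax : IsMaxOn (logLik n) V μ) (hv : v ∈ V) :
    (n - fun i => exp (μ i)) ⬝ᵥ v = 0 := by
  have hline : IsLocalMax (fun t : ℝ => logLik n (μ + t • v)) 0 :=
    Eventually.of_forall fun t => by simpa using hmax (V.add_mem hμ (V.smul_mem t hv))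
  exact hline.hasDerivAt_eq_zero (hasDerivAt_logLik_line n μ v)

theorem exists_isMaxOn_logLik_iff (n : I → ℝ) (V : Submodule ℝ (I → ℝ)) :
    (∃ μ ∈ V, IsMaxOn (logLik n) V μ) ↔ ∃ y, (∀ v ∈ V, y ⬝ᵥ v = 0) ∧ ∀ i, 0 < y i + n i := by
  constructor
  · rintro ⟨μ, hμ, hmax⟩
    refine ⟨(fun i => exp (μ i)) - n, fun v hv => ?_, fun i => by simp [exp_pos]⟩
    rw [← neg_sub, neg_dotProduct, dotProduct_eq_zero_of_isMaxOn_logLik hμ hmax hv, neg_zero]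
  · rintro ⟨y, hy, hpos⟩
    obtain ⟨μ, hμ, hmax⟩ := (continuous_logLik (y + n)).continuousOn.exists_isMaxOn'
      V.closed_of_finiteDimensional V.zero_mem
      (((tendsto_logLik_cocompact_atBot hpos).eventually_le_atBot _).filter_mono inf_le_left)
    refine ⟨μ, hμ, fun ν hν => ?_⟩
    have h : logLik (y + n) ν ≤ logLik (y + n) μ := hmax hν
    rwa [logLik_add_of_dotProduct_eq_zero (hy _ hν),
      logLik_add_of_dotProduct_eq_zero (hy _ hμ)] at h

lemma logLik_log (n : I → ℝ) {m : I → ℝ} (hm : ∀ i, 0 < m i) :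
    logLik n (fun i => log (m i)) = ∑ i, n i * log (m i) - ∑ i, m i := by
  simp only [logLik, exp_log (hm _)]
  rfl

theorem exists_pos_isMaxOn_iff (n : I → ℝ) (S : Set (I → ℝ)) :
    (∃ mhat : I → ℝ, (∀ i, 0 < mhat i) ∧ (fun i => log (mhat i)) ∈ S ∧
      ∀ m : I → ℝ, (∀ i, 0 < m i) → (fun i => log (m i)) ∈ S →
        ∑ i, n i * log (m i) - ∑ i, m i ≤ ∑ i, n i * log (mhat i) - ∑ i, mhat i) ↔
    ∃ μ ∈ S, IsMaxOn (logLik n) S μ := by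
  have hexp (μ : I → ℝ) : (fun i => log (exp (μ i))) = μ := by simp
  constructor
  · rintro ⟨mhat, hpos, hS, hmax⟩
    refine ⟨_, hS, fun μ hμ => ?_⟩
    have := hmax (fun i => exp (μ i)) (fun i => exp_pos _) ((hexp μ).symm ▸ hμ)
    rwa [← logLik_log n hpos, ← logLik_log n fun i => exp_pos _, hexp] at this
  · rintro ⟨μ, hμ, hmax⟩
    refine ⟨fun i => exp (μ i), fun i => exp_pos _, (hexp μ).symm ▸ hμ, fun m hm hS => ?_⟩
    rw [← logLik_log n hm, ← logLik_log n fun i => exp_pos _, hexp]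
    exact hmax hS

end LogLik

theorem Matrix.transpose_mulVec_eq_zero_iff {m k R : Type*} [Fintype m] [Fintype k] [CommRing R]
    (X : Matrix m k R) (y : m → R) :
    Xᵀ *ᵥ y = 0 ↔ ∀ v ∈ LinearMap.range X.mulVecLin, y ⬝ᵥ v = 0 := by
  simp [← dotProduct_eq_zero_iff, dotProduct_mulVec, ← mulVec_transpose]

theorem mle_exists_iff_general {I : Type*} [Fintype I] {d : ℕ}
    (X : Matrix I (Fin d) ℝ) (n : I → ℝ) :
    (∃ mhat : I → ℝ, (∀ i, 0 < mhat i) ∧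
      (∃ θ : Fin d → ℝ, (fun i => Real.log (mhat i)) = X.mulVec θ) ∧
      (∀ m : I → ℝ, (∀ i, 0 < m i) →
        (∃ θ : Fin d → ℝ, (fun i => Real.log (m i)) = X.mulVec θ) →
        (∑ i, n i * Real.log (m i) - ∑ i, m i) ≤
          (∑ i, n i * Real.log (mhat i) - ∑ i, mhat i)))
    ↔ (∃ y : I → ℝ, X.transpose.mulVec y = 0 ∧ ∀ i, 0 < y i + n i) := by
  have hcol : {μ | ∃ θ, μ = X *ᵥ θ} = (LinearMap.range X.mulVecLin : Set (I → ℝ)) := by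
    ext μ; simp [eq_comm]
  refine (exists_pos_isMaxOn_iff n {μ | ∃ θ, μ = X *ᵥ θ}).trans ?_
  simp only [hcol, transpose_mulVec_eq_zero_iff]
  exact exists_isMaxOn_logLik_iff n _

/-- The MLE exists iff there exists `y` with `Xᵀy = 0` and `y + n > 0`
(Haberman's condition, Theorem 2.2). -/
theorem mle_exists_iff {I : Type*} [Fintype I] [Nonempty I] {d : ℕ}
    (X : Matrix I (Fin d) ℝ) (n : I → ℝ) (hn : ∀ i, 0 ≤ n i) :
    (∃ mhat : I → ℝ, (∀ i, 0 < mhat i) ∧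
      (∃ θ : Fin d → ℝ, (fun i => Real.log (mhat i)) = X.mulVec θ) ∧
      (∀ m : I → ℝ, (∀ i, 0 < m i) →
        (∃ θ : Fin d → ℝ, (fun i => Real.log (m i)) = X.mulVec θ) →
        (∑ i, n i * Real.log (m i) - ∑ i, m i) ≤
          (∑ i, n i * Real.log (mhat i) - ∑ i, mhat i)))
    ↔ (∃ y : I → ℝ, X.transpose.mulVec y = 0 ∧ ∀ i, 0 < y i + n i) :=
  mle_exists_iff_general X n
end

section
/- Let I be a finite nonempty index set, X a real |I|×d matrix, and n ∈ ℝ^I with n(i) ≥ 0 for all i. Suppose there exists y ∈ ℝ^I with Xᵀy = 0 and y(i) + n(i) > 0 for all i. Then the log-likelihood is bounded above on the model: for every m ∈ ℝ^I with m(i) > 0 for all i and log m in the column space of X, l(m) ≤ ∑_{i∈I} [ (y(i)+n(i)) log(y(i)+n(i)) − (y(i)+n(i)) ]. -/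
lemma pointwise_bound (c m : ℝ) (hc : 0 < c) (hm : 0 < m) :
    c * Real.log m - m ≤ c * Real.log c - c := by
  have h1 : Real.log (m / c) ≤ m / c - 1 := Real.log_le_sub_one_of_pos (by positivity)
  have h2 : Real.log (m / c) = Real.log m - Real.log c :=
    Real.log_div (ne_of_gt hm) (ne_of_gt hc)
  have h3 : c * (Real.log m - Real.log c) ≤ c * (m / c - 1) := by
    rw [← h2]; exact mul_le_mul_of_nonneg_left h1 hc.le
  have h4 : c * (m / c - 1) = m - c := by field_simp
  nlinarith [h3]

/-- If there exists `y` with `Xᵀy = 0` and `y + n > 0`, then the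
log-likelihood is bounded above on the model. -/
theorem loglik_bounded_above {I : Type*} [Fintype I] [Nonempty I] {d : ℕ}
    (X : Matrix I (Fin d) ℝ) (n : I → ℝ) (hn : ∀ i, 0 ≤ n i)
    (y : I → ℝ) (hy : X.transpose.mulVec y = 0) (hyn : ∀ i, 0 < y i + n i) :
    ∀ m : I → ℝ, (∀ i, 0 < m i) →
      (∃ θ : Fin d → ℝ, (fun i => Real.log (m i)) = X.mulVec θ) →
      (∑ i, n i * Real.log (m i) - ∑ i, m i) ≤
        ∑ i, ((y i + n i) * Real.log (y i + n i) - (y i + n i)) := by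
  intro m hm ⟨θ, hθ⟩
  have hzero : ∑ i, y i * Real.log (m i) = 0 := by
    have : (fun i => Real.log (m i)) = X.mulVec θ := hθ
    calc ∑ i, y i * Real.log (m i) = dotProduct y (X.mulVec θ) := by
          simp [dotProduct, ← this]
      _ = dotProduct (X.transpose.mulVec y) θ := by
          rw [Matrix.dotProduct_mulVec]
          congr 1
          ext j
          simp [Matrix.vecMul, Matrix.mulVec, dotProduct, Matrix.transpose, mul_comm]
      _ = 0 := by rw [hy]; simp
  have key : ∑ i, ((y i + n i) * Real.log (m i) - m i) ≤
      ∑ i, ((y i + n i) * Real.log (y i + n i) - (y i + n i)) :=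
    Finset.sum_le_sum fun i _ => pointwise_bound _ _ (hyn i) (hm i)
  have split : ∑ i, ((y i + n i) * Real.log (m i) - m i)
      = (∑ i, y i * Real.log (m i)) + ((∑ i, n i * Real.log (m i)) - ∑ i, m i) := by
    rw [Finset.sum_sub_distrib]
    have : ∑ i, (y i + n i) * Real.log (m i)
        = ∑ i, y i * Real.log (m i) + ∑ i, n i * Real.log (m i) := by
      rw [← Finset.sum_add_distrib]
      exact Finset.sum_congr rfl fun i _ => by ring
    rw [this]; ring
  have : ∑ i, n i * Real.log (m i) - ∑ i, m i
      = ∑ i, ((y i + n i) * Real.log (m i) - m i) := by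
    rw [split, hzero, zero_add]
  rw [this]
  exact key
end

section
/- Let I be a finite nonempty index set, X a real |I|×d matrix, and n ∈ ℝ^I with n(i) ≥ 0 for all i. If m̂ ∈ ℝ^I satisfies m̂(i) > 0 for all i, log m̂ lies in the column space of X, and l(m̂) ≥ l(m) for every m ∈ ℝ^I with m(i) > 0 for all i and log m in the column space of X, then m̂ matches the sufficient statistic: Xᵀm̂ = Xᵀn. -/
/-!
Tilting a positive `m` along a direction `v` of the model, `m i ↦ m i * exp (t * v i)`, stays in
the model, since it adds `t • v` to `log m`. Along this curve the log-likelihood has derivative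
`∑ i, (n i - m i) * v i` at `t = 0`, which must vanish at a maximizer. Taking `v = X *ᵥ φ` for all
`φ` gives `Xᵀ *ᵥ m̂ = Xᵀ *ᵥ n`.
-/

open Real Matrix

namespace PoissonLogLinear

variable {I : Type*}

noncomputable def logLikelihood [Fintype I] (n m : I → ℝ) : ℝ :=
  ∑ i, n i * log (m i) - ∑ i, m i

noncomputable def tilt (m v : I → ℝ) (t : ℝ) : I → ℝ :=
  fun i => m i * exp (t * v i)

@[simp]
theorem tilt_zero (m v : I → ℝ) : tilt m v 0 = m := by
  funext i
  simp [tilt]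

theorem log_tilt {m : I → ℝ} (hm : ∀ i, 0 < m i) (v : I → ℝ) (t : ℝ) (i : I) :
    log (tilt m v t i) = log (m i) + t * v i := by
  rw [tilt, log_mul (hm i).ne' (exp_pos _).ne', log_exp]

theorem tilt_pos {m : I → ℝ} (hm : ∀ i, 0 < m i) (v : I → ℝ) (t : ℝ) (i : I) :
    0 < tilt m v t i :=
  mul_pos (hm i) (exp_pos _)

theorem log_tilt_mulVec [Fintype I] {d : Type*} [Fintype d] (X : Matrix I d ℝ) {m : I → ℝ}
    (hm : ∀ i, 0 < m i) {θ : d → ℝ} (hθ : (fun i => log (m i)) = X *ᵥ θ) (φ : d → ℝ) (t : ℝ) :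
    (fun i => log (tilt m (X *ᵥ φ) t i)) = X *ᵥ (θ + t • φ) := by
  funext i
  rw [log_tilt hm, mulVec_add, mulVec_smul, ← hθ]
  rfl

theorem hasDerivAt_logLikelihood_tilt [Fintype I] (n : I → ℝ) {m : I → ℝ} (hm : ∀ i, 0 < m i)
    (v : I → ℝ) :
    HasDerivAt (fun t => logLikelihood n (tilt m v t)) (∑ i, (n i - m i) * v i) 0 := by
  have hlin : HasDerivAt (fun t => ∑ i, n i * (log (m i) + t * v i)) (∑ i, n i * v i) 0 :=
    HasDerivAt.fun_sum fun i _ => by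
      simpa using (((hasDerivAt_id (0 : ℝ)).mul_const (v i)).const_add (log (m i))).const_mul (n i)
  have hexp : HasDerivAt (fun t => ∑ i, tilt m v t i) (∑ i, m i * v i) 0 :=
    HasDerivAt.fun_sum fun i _ => by
      simpa [tilt] using (((hasDerivAt_id (0 : ℝ)).mul_const (v i)).exp).const_mul (m i)
  simp only [sub_mul, Finset.sum_sub_distrib]
  refine (hlin.sub hexp).congr_of_eventuallyEq (Filter.Eventually.of_forall fun t => ?_)
  simp only [logLikelihood, log_tilt hm, Pi.sub_apply]

theorem dotProduct_eq_of_logLikelihood_tilt_le [Fintype I] (n : I → ℝ) {m : I → ℝ} (hm : ∀ i, 0 < m i)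
    (v : I → ℝ) (hmax : ∀ t, logLikelihood n (tilt m v t) ≤ logLikelihood n m) :
    v ⬝ᵥ m = v ⬝ᵥ n := by
  have hlocal : IsLocalMax (fun t => logLikelihood n (tilt m v t)) 0 :=
    Filter.Eventually.of_forall fun t => by simpa using hmax t
  have hcrit : ∑ i, (n i - m i) * v i = 0 :=
    (hasDerivAt_logLikelihood_tilt n hm v).deriv ▸ hlocal.deriv_eq_zero
  simp only [sub_mul, Finset.sum_sub_distrib, sub_eq_zero] at hcrit
  simp only [dotProduct, mul_comm (v _), hcrit]

theorem transpose_mulVec_dotProduct [Fintype I] {d : Type*} [Fintype d] (X : Matrix I d ℝ) (m : I → ℝ)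
    (φ : d → ℝ) : Xᵀ *ᵥ m ⬝ᵥ φ = X *ᵥ φ ⬝ᵥ m := by
  rw [dotProduct_comm, dotProduct_mulVec, vecMul_transpose]

end PoissonLogLinear

open PoissonLogLinear in
theorem mle_matches_sufficient_statistic_general {I : Type*} [Fintype I] {d : ℕ}
    (X : Matrix I (Fin d) ℝ) (n : I → ℝ)
    (mhat : I → ℝ) (hpos : ∀ i, 0 < mhat i)
    (hmodel : ∃ θ : Fin d → ℝ, (fun i => Real.log (mhat i)) = X.mulVec θ)
    (hmax : ∀ m : I → ℝ, (∀ i, 0 < m i) →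
      (∃ θ : Fin d → ℝ, (fun i => Real.log (m i)) = X.mulVec θ) →
      (∑ i, n i * Real.log (m i) - ∑ i, m i) ≤
        (∑ i, n i * Real.log (mhat i) - ∑ i, mhat i)) :
    X.transpose.mulVec mhat = X.transpose.mulVec n := by
  obtain ⟨θ, hθ⟩ := hmodel
  refine dotProduct_eq _ _ fun φ => ?_
  rw [transpose_mulVec_dotProduct, transpose_mulVec_dotProduct]
  exact dotProduct_eq_of_logLikelihood_tilt_le n hpos (X *ᵥ φ) fun t =>
    hmax _ (tilt_pos hpos _ t) ⟨_, log_tilt_mulVec X hpos hθ φ t⟩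

/-- A maximizer of the log-likelihood over the model matches the
sufficient statistic: `Xᵀ m̂ = Xᵀ n`. -/
theorem mle_matches_sufficient_statistic {I : Type*} [Fintype I] [Nonempty I] {d : ℕ}
    (X : Matrix I (Fin d) ℝ) (n : I → ℝ) (hn : ∀ i, 0 ≤ n i)
    (mhat : I → ℝ) (hpos : ∀ i, 0 < mhat i)
    (hmodel : ∃ θ : Fin d → ℝ, (fun i => Real.log (mhat i)) = X.mulVec θ)
    (hmax : ∀ m : I → ℝ, (∀ i, 0 < m i) →
      (∃ θ : Fin d → ℝ, (fun i => Real.log (m i)) = X.mulVec θ) →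
      (∑ i, n i * Real.log (m i) - ∑ i, m i) ≤
        (∑ i, n i * Real.log (mhat i) - ∑ i, mhat i)) :
    X.transpose.mulVec mhat = X.transpose.mulVec n :=
  mle_matches_sufficient_statistic_general X n mhat hpos hmodel hmax
end

section
/- Let f_i ∈ ℝ^d, i ∈ I (I finite), be distinct vectors with entries in {0,1} and first coordinate equal to 1, and let C^p = {∑_{i∈I} a(i) f_i : a(i) ≥ 0 for all i}. Let F be a face of C^p. Then every f_j with f_j ∈ F generates an extreme ray of F: whenever f_j = u + v with u, v ∈ F, both u and v are nonnegative scalar multiples of f_j. -/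
/-- Every `f j` belonging to a face `F` of `C^p` generates an extreme ray
of `F` (part of Theorem 3.4). -/
theorem generator_is_extreme_ray {I : Type*} [Fintype I] [Nonempty I] {d : ℕ}
    (hd : 0 < d) (f : I → (Fin d → ℝ)) (hinj : Function.Injective f)
    (hf01 : ∀ i j, f i j = 0 ∨ f i j = 1) (hf1 : ∀ i, f i ⟨0, hd⟩ = 1)
    (Cp : Set (Fin d → ℝ)) (hCp : Cp = {x | ∃ a : I → ℝ, (∀ i, 0 ≤ a i) ∧ x = ∑ i, a i • f i})
    (c : Fin d → ℝ) (hc : ∀ x ∈ Cp, (∑ j, c j * x j) ≤ 0)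
    (F : Set (Fin d → ℝ)) (hF : F = Cp ∩ {x | (∑ j, c j * x j) = 0}) (hFne : F.Nonempty)
    (j : I) (hj : f j ∈ F) :
    ∀ u v : Fin d → ℝ, u ∈ F → v ∈ F → f j = u + v →
      (∃ α : ℝ, 0 ≤ α ∧ u = α • f j) ∧ (∃ β : ℝ, 0 ≤ β ∧ v = β • f j) := by
  intro u v hu hv huv
  rw [hF] at hu hv
  obtain ⟨hu, -⟩ := hu
  obtain ⟨hv, -⟩ := hv
  rw [hCp] at hu hv
  obtain ⟨a, ha0, hua⟩ := hu
  obtain ⟨b, hb0, hvb⟩ := hv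
  have hcc0 : ∀ i, 0 ≤ a i + b i := fun i => add_nonneg (ha0 i) (hb0 i)
  have hsum : f j = ∑ i, (a i + b i) • f i := by
    rw [huv, hua, hvb, ← Finset.sum_add_distrib]
    simp [add_smul]
  have hcoord : ∀ k, f j k = ∑ i, (a i + b i) * f i k := by
    intro k
    have := congrFun hsum k
    simpa using this
  have hS : ∑ i, (a i + b i) = 1 := by
    have := hcoord ⟨0, hd⟩
    rw [hf1 j] at this
    calc ∑ i, (a i + b i) = ∑ i, (a i + b i) * f i ⟨0, hd⟩ :=
          Finset.sum_congr rfl fun i _ => by rw [hf1 i, mul_one]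
      _ = 1 := this.symm
  -- nonnegativity of entries
  have hge0 : ∀ i k, (0:ℝ) ≤ f i k := by
    intro i k; rcases hf01 i k with h | h <;> rw [h] <;> norm_num
  have hle1 : ∀ i k, f i k ≤ 1 := by
    intro i k; rcases hf01 i k with h | h <;> rw [h] <;> norm_num
  have hkey : ∀ i, i ≠ j → a i + b i = 0 := by
    intro i0 hij
    by_contra hne
    have hpos : 0 < a i0 + b i0 := lt_of_le_of_ne (hcc0 i0) (Ne.symm hne)
    have hfne : f i0 ≠ f j := fun h => hij (hinj h)
    obtain ⟨k, hk⟩ := Function.ne_iff.mp hfne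
    rcases hf01 j k with hjk | hjk
    · -- f j k = 0, so f i0 k = 1
      have hi0k : f i0 k = 1 := by
        rcases hf01 i0 k with h | h
        · exact absurd (h.trans hjk.symm) hk
        · exact h
      have h0 : ∑ i, (a i + b i) * f i k = 0 := by rw [← hcoord k, hjk]
      have := (Finset.sum_eq_zero_iff_of_nonneg
        (fun i _ => mul_nonneg (hcc0 i) (hge0 i k))).mp h0 i0 (Finset.mem_univ i0)
      rw [hi0k, mul_one] at this
      exact hne this
    · -- f j k = 1, so f i0 k = 0
      have hi0k : f i0 k = 0 := by
        rcases hf01 i0 k with h | h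
        · exact h
        · exact absurd (h.trans hjk.symm) hk
      have h0 : ∑ i, (a i + b i) * (1 - f i k) = 0 := by
        have : ∑ i, (a i + b i) * (1 - f i k)
            = (∑ i, (a i + b i)) - ∑ i, (a i + b i) * f i k := by
          rw [← Finset.sum_sub_distrib]
          exact Finset.sum_congr rfl fun i _ => by ring
        rw [this, hS, ← hcoord k, hjk, sub_self]
      have := (Finset.sum_eq_zero_iff_of_nonneg
        (fun i _ => mul_nonneg (hcc0 i) (by linarith [hle1 i k]))).mp h0 i0 (Finset.mem_univ i0)
      rw [hi0k] at this
      simp at this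
      exact hne this
  have haz : ∀ i, i ≠ j → a i = 0 := by
    intro i hij
    have := hkey i hij
    linarith [ha0 i, hb0 i]
  have hbz : ∀ i, i ≠ j → b i = 0 := by
    intro i hij
    have := hkey i hij
    linarith [ha0 i, hb0 i]
  constructor
  · exact ⟨a j, ha0 j, by
      rw [hua]
      rw [Finset.sum_eq_single j (fun i _ hi => by rw [haz i hi, zero_smul])
        (fun h => absurd (Finset.mem_univ j) h)]⟩
  · exact ⟨b j, hb0 j, by
      rw [hvb]
      rw [Finset.sum_eq_single j (fun i _ hi => by rw [hbz i hi, zero_smul])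
        (fun h => absurd (Finset.mem_univ j) h)]⟩
end

section
/- Let X be a real |I|×d matrix with rows f_i ∈ ℝ^d, i ∈ I (I finite), let n ∈ ℝ^I with n(i) ≥ 0 for all i, and let C^p = {Xᵀa : a ∈ ℝ^I, a(i) ≥ 0 for all i}. Then there exists y ∈ ℝ^I with Xᵀy = 0 and y(i) + n(i) > 0 for all i, if and only if the sufficient statistic t = Xᵀn belongs to the relative interior of C^p. -/
/-!
With `f = Xᵀ` and `P` the nonnegative orthant, `Cp = f '' P`, and the positivity condition says
exactly that `Xᵀn ∈ f '' interior P`. For convex `P` with nonempty interior, `f '' interior P` is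
the relative interior of `f '' P`: the affine span of `f '' P` is the range of `f`, onto which `f`
is an open map; conversely, a relative-interior point `t` can be pushed slightly past itself away
from `f y`, `y ∈ interior P`, without leaving `f '' P`, so `t` is the image of a point strictly
between a point of `P` and `y`, which lies in `interior P`.
-/

open Set Filter Topology

section

variable {E F : Type*} [NormedAddCommGroup E] [NormedSpace ℝ E]
  [NormedAddCommGroup F] [NormedSpace ℝ F]

theorem eventually_lineMap_mem_of_mem_intrinsicInterior {s : Set F} {x y : F}
    (hx : x ∈ intrinsicInterior ℝ s) (hy : y ∈ affineSpan ℝ s) :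
    ∀ᶠ l in 𝓝 (0 : ℝ), AffineMap.lineMap x y l ∈ s := by
  obtain ⟨p, hp, rfl⟩ := mem_intrinsicInterior.1 hx
  let c : ℝ → affineSpan ℝ s := fun l =>
    ⟨AffineMap.lineMap (p : F) y l, AffineMap.lineMap_mem l p.2 hy⟩
  have hc : Continuous c := AffineMap.lineMap_continuous.subtype_mk _
  have hc0 : c 0 = p := Subtype.ext (AffineMap.lineMap_apply_zero _ _)
  exact mem_of_superset (hc.continuousAt.preimage_mem_nhds (hc0 ▸ isOpen_interior.mem_nhds hp))
    (preimage_mono interior_subset)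

theorem Convex.intrinsicInterior_image_subset {s : Set E} (hs : Convex ℝ s) {y : E}
    (hy : y ∈ interior s) (f : E →ₗ[ℝ] F) : intrinsicInterior ℝ (f '' s) ⊆ f '' interior s := by
  intro t ht
  have hfy : f y ∈ affineSpan ℝ (f '' s) :=
    subset_affineSpan ℝ _ (mem_image_of_mem f (interior_subset hy))
  obtain ⟨l, hl, a, ha, hfa⟩ := (eventually_lineMap_mem_of_mem_intrinsicInterior ht hfy).exists_lt
  have hl' : 0 < 1 - l := by linarith
  refine ⟨(1 / (1 - l)) • a + (-l / (1 - l)) • y, hs.combo_self_interior_mem_interior ha hy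
    (by positivity) (div_pos (neg_pos.2 hl) hl') (by field_simp; ring), ?_⟩
  rw [map_add, map_smul, map_smul, hfa, AffineMap.lineMap_apply_module]
  match_scalars
  · field_simp
  · field_simp; ring

theorem LinearMap.image_interior_subset_intrinsicInterior_image [FiniteDimensional ℝ E]
    (f : E →ₗ[ℝ] F) (s : Set E) : f '' interior s ⊆ intrinsicInterior ℝ (f '' s) := by
  rintro _ ⟨x, hx, rfl⟩
  have hspan : (LinearMap.range f : Set F) = affineSpan ℝ (f '' s) := by
    have hs : affineSpan ℝ s = ⊤ :=
      top_unique <| isOpen_interior.affineSpan_eq_top ⟨x, hx⟩ ▸ affineSpan_mono ℝ interior_subset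
    rw [← f.coe_toAffineMap, ← AffineSubspace.map_span, hs, AffineSubspace.coe_map,
      AffineSubspace.top_coe, image_univ, f.coe_toAffineMap, LinearMap.coe_range]
  let g : E → affineSpan ℝ (f '' s) := Homeomorph.setCongr hspan ∘ f.rangeRestrict
  have hg : IsOpenMap g := (Homeomorph.isOpenMap _).comp
    (f.rangeRestrict.isOpenMap_of_finiteDimensional f.surjective_rangeRestrict)
  rw [mem_intrinsicInterior]
  refine ⟨g x, (hg _ isOpen_interior).subset_interior_iff.2 ?_ ⟨x, hx, rfl⟩, rfl⟩
  rintro _ ⟨e, he, rfl⟩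
  exact ⟨e, interior_subset he, rfl⟩

theorem Convex.intrinsicInterior_image_eq [FiniteDimensional ℝ E] {s : Set E} (hs : Convex ℝ s)
    (hs' : (interior s).Nonempty) (f : E →ₗ[ℝ] F) :
    intrinsicInterior ℝ (f '' s) = f '' interior s :=
  (hs.intrinsicInterior_image_subset hs'.some_mem f).antisymm
    (f.image_interior_subset_intrinsicInterior_image s)

end

theorem exists_y_iff_t_mem_relint_general {I : Type*} [Fintype I] {d : ℕ}
    (X : Matrix I (Fin d) ℝ) (n : I → ℝ)
    (Cp : Set (Fin d → ℝ))
    (hCp : Cp = {t | ∃ a : I → ℝ, (∀ i, 0 ≤ a i) ∧ t = X.transpose.mulVec a}) :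
    (∃ y : I → ℝ, X.transpose.mulVec y = 0 ∧ ∀ i, 0 < y i + n i) ↔
      X.transpose.mulVec n ∈ intrinsicInterior ℝ Cp := by
  have hCp' : Cp = X.transpose.mulVecLin '' univ.pi fun _ => Ici 0 := by
    subst hCp
    ext t
    simp only [mem_ofPred_eq, mem_image, Set.mem_pi, mem_univ, mem_Ici, forall_const,
      Matrix.mulVecLin_apply]
    exact exists_congr fun a => and_congr Iff.rfl eq_comm
  have hint : interior (univ.pi fun _ : I => Ici (0 : ℝ)) = univ.pi fun _ => Ioi 0 := by
    simp only [interior_pi_set finite_univ, interior_Ici]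
  rw [hCp', (convex_pi fun _ _ => convex_Ici 0).intrinsicInterior_image_eq
    (hint ▸ ⟨1, by simp⟩), hint]
  constructor
  · rintro ⟨y, hy, hpos⟩
    refine ⟨y + n, fun i _ => hpos i, ?_⟩
    rw [Matrix.mulVecLin_apply, Matrix.mulVec_add, hy, zero_add]
  · rintro ⟨b, hb, hbn⟩
    refine ⟨b - n, ?_, fun i => by simpa using hb i (mem_univ i)⟩
    rw [Matrix.mulVec_sub, ← Matrix.mulVecLin_apply, hbn, sub_self]

/-- There exists `y` with `Xᵀy = 0` and `y + n > 0` iff the sufficient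
statistic `t = Xᵀn` lies in the relative interior of the cone `C^p` (Corollary 3.5). -/
theorem exists_y_iff_t_mem_relint {I : Type*} [Fintype I] [Nonempty I] {d : ℕ}
    (X : Matrix I (Fin d) ℝ) (n : I → ℝ) (hn : ∀ i, 0 ≤ n i)
    (Cp : Set (Fin d → ℝ))
    (hCp : Cp = {t | ∃ a : I → ℝ, (∀ i, 0 ≤ a i) ∧ t = X.transpose.mulVec a}) :
    (∃ y : I → ℝ, X.transpose.mulVec y = 0 ∧ ∀ i, 0 < y i + n i) ↔
      X.transpose.mulVec n ∈ intrinsicInterior ℝ Cp :=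
  exists_y_iff_t_mem_relint_general X n Cp hCp
end

section
/- Let f_i ∈ ℝ^d, i ∈ I (I finite), each with first coordinate equal to 1, let X be the matrix with rows f_i, and let C^p = {∑_{i∈I} a(i) f_i : a(i) ≥ 0 for all i}. Let n ∈ ℝ^I with n(i) ≥ 0 for all i and t = Xᵀn, and let F be a face of C^p with t in the relative interior of F, with I_F = {i ∈ I : f_i ∈ F}. Then, for each i ∈ I: i ∈ I_F if and only if there exists a ∈ ℝ^I with a(j) ≥ 0 for all j, Xᵀa = t, and a(i) > 0. -/
lemma push_beyond {d : ℕ} {s : Set (Fin d → ℝ)} {t x : Fin d → ℝ} (hx : x ∈ s)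
    (ht : t ∈ intrinsicInterior ℝ s) :
    ∃ ε : ℝ, 0 < ε ∧ x + (1 + ε) • (t - x) ∈ s := by
  obtain ⟨y, hy, hyt⟩ := mem_intrinsicInterior.1 ht
  rw [mem_interior_iff_mem_nhds, nhds_subtype, Filter.mem_comap] at hy
  obtain ⟨V, hV, hVs⟩ := hy
  set γ : ℝ → (Fin d → ℝ) := fun r => x + r • (t - x) with hγ
  have hcont : Continuous γ := by fun_prop
  have hγ1 : γ 1 = t := by simp [hγ]
  have hpre : γ ⁻¹' V ∈ nhds (1 : ℝ) := by
    apply hcont.continuousAt.preimage_mem_nhds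
    rw [hγ1, ← hyt]; exact hV
  obtain ⟨δ, hδ, hball⟩ := Metric.mem_nhds_iff.1 hpre
  refine ⟨δ/2, by positivity, ?_⟩
  have hmemV : γ (1 + δ/2) ∈ V := by
    apply hball
    simp only [Metric.mem_ball, Real.dist_eq]
    rw [add_sub_cancel_left, abs_of_pos (by positivity)]
    linarith
  have hts : t ∈ s := intrinsicInterior_subset ht
  have hspan : γ (1 + δ/2) ∈ affineSpan ℝ s := by
    have := AffineSubspace.smul_vsub_vadd_mem (affineSpan ℝ s) (1 + δ/2)
      (subset_affineSpan ℝ s hts) (subset_affineSpan ℝ s hx) (subset_affineSpan ℝ s hx)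
    simpa [hγ, vsub_eq_sub, vadd_eq_add, add_comm] using this
  exact hVs (show (⟨γ (1 + δ/2), hspan⟩ : affineSpan ℝ s) ∈ _ from hmemV)

/-- If `t = Xᵀn` lies in the relative interior of a face `F` of `C^p`,
then `i ∈ I_F` iff some nonnegative representation of `t` puts positive weight on `i`. -/
theorem mem_facial_set_iff_pos_weight {I : Type*} [Fintype I] [Nonempty I] {d : ℕ}
    (hd : 0 < d) (f : I → (Fin d → ℝ)) (hf1 : ∀ i, f i ⟨0, hd⟩ = 1)
    (Cp : Set (Fin d → ℝ)) (hCp : Cp = {x | ∃ a : I → ℝ, (∀ i, 0 ≤ a i) ∧ x = ∑ i, a i • f i})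
    (n : I → ℝ) (hn : ∀ i, 0 ≤ n i)
    (t : Fin d → ℝ) (ht : t = ∑ i, n i • f i)
    (c : Fin d → ℝ) (hc : ∀ x ∈ Cp, (∑ j, c j * x j) ≤ 0)
    (F : Set (Fin d → ℝ)) (hF : F = Cp ∩ {x | (∑ j, c j * x j) = 0}) (hFne : F.Nonempty)
    (htF : t ∈ intrinsicInterior ℝ F) :
    ∀ i : I, f i ∈ F ↔
      ∃ a : I → ℝ, (∀ j, 0 ≤ a j) ∧ (∑ j, a j • f j = t) ∧ 0 < a i := by
  classical
  have htFmem : t ∈ F := intrinsicInterior_subset htF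
  have hfCp : ∀ j : I, f j ∈ Cp := by
    intro j
    rw [hCp]
    refine ⟨fun k => if k = j then 1 else 0, fun k => by positivity, ?_⟩
    simp [ite_smul]
  intro i
  constructor
  · intro hiF
    obtain ⟨ε, hε, hz⟩ := push_beyond hiF htF
    set z : Fin d → ℝ := f i + (1 + ε) • (t - f i) with hzdef
    have hzCp : z ∈ Cp := (hF ▸ hz).1
    rw [hCp] at hzCp
    obtain ⟨b, hb, hbz⟩ := hzCp
    have h1ε : (0:ℝ) < 1 + ε := by linarith
    refine ⟨fun j => (1 + ε)⁻¹ * (b j + if j = i then ε else 0), ?_, ?_, ?_⟩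
    · intro j
      have := hb j
      simp only
      split <;> positivity
    · have key : ∑ j, (b j + if j = i then ε else 0) • f j = (1 + ε) • t := by
        rw [Finset.sum_congr rfl (fun j _ => add_smul (b j) _ (f j)),
          Finset.sum_add_distrib, ← hbz]
        have : ∑ j, (if j = i then ε else 0) • f j = ε • f i := by
          simp [ite_smul]
        rw [this, hzdef]
        module
      calc ∑ j, ((1 + ε)⁻¹ * (b j + if j = i then ε else 0)) • f j
          = (1 + ε)⁻¹ • ∑ j, (b j + if j = i then ε else 0) • f j := by
            rw [Finset.smul_sum]
            exact Finset.sum_congr rfl fun j _ => by rw [smul_smul]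
        _ = t := by rw [key, inv_smul_smul₀ (ne_of_gt h1ε)]
    · simp only [if_pos rfl]
      have := hb i
      positivity
  · rintro ⟨a, ha, hat, hai⟩
    have htc : (∑ j, c j * t j) = 0 := (hF ▸ htFmem).2
    have hsum : ∑ j, a j * (∑ k, c k * f j k) = 0 := by
      rw [← htc, ← hat]
      simp only [Finset.sum_apply, Pi.smul_apply, smul_eq_mul, Finset.mul_sum]
      rw [Finset.sum_comm]
      exact Finset.sum_congr rfl fun j _ => Finset.sum_congr rfl fun k _ => by ring
    have hnonpos : ∀ j ∈ Finset.univ, a j * (∑ k, c k * f j k) ≤ 0 := fun j _ =>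
      mul_nonpos_of_nonneg_of_nonpos (ha j) (hc _ (hfCp j))
    have hzero := (Finset.sum_eq_zero_iff_of_nonpos hnonpos).1 hsum i (Finset.mem_univ i)
    have hfi0 : (∑ k, c k * f i k) = 0 := by
      rcases mul_eq_zero.1 hzero with h | h
      · exact absurd h (ne_of_gt hai)
      · exact h
    rw [hF]
    exact ⟨hfCp i, hfi0⟩
end
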